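/- For a monoid S the following are equivalent: (i) for every family {A_i : i ∈ I} of right S-acts, if the coproduct ⨆_{i∈I} A_i is InD-injective then each A_i is InD-injective; (ii) for every family {A_i : i ∈ I} of right S-acts, if the coproduct ⨆_{i∈I} A_i is PInD-injective then each A_i is PInD-injective; (iii) S is not left reversible or S contains a left zero. -/

import Mathlib

universe u

/-- A right `S`-act structure on a nonempty type `A`: a right action of the monoid `S`. -/
class RightAct (S : Type u) [Monoid S] (A : Type u) : Type u where
  act : A → S → A
  act_one : ∀ a : A, act a 1 = a
  act_mul : ∀ (a : A) (s t : S), act (act a s) t = act a (s * t)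
  nonempty : Nonempty A

infixl:70 " ⊛ " => RightAct.act

/-- `S` is left reversible: every two right ideals (equiv. principal ones) intersect. -/
def LeftReversible (S : Type u) [Monoid S] : Prop :=
  ∀ a b : S, ∃ u v : S, a * u = b * v

/-- A left zero element of the monoid `S`. -/
def IsLeftZero (S : Type u) [Monoid S] (z : S) : Prop :=
  ∀ s : S, z * s = z

/-- `f : A → B` is a homomorphism of right `S`-acts. -/
def IsActHom (S : Type u) [Monoid S] {A B : Type u} [RightAct S A] [RightAct S B]
    (f : A → B) : Prop :=
  ∀ (a : A) (s : S), f (a ⊛ s) = f a ⊛ s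

/-- The restriction of `f : A → B` to the subset `C` is a homomorphism of right `S`-acts. -/
def IsActHomOn (S : Type u) [Monoid S] {A B : Type u} [RightAct S A] [RightAct S B]
    (f : A → B) (C : Set A) : Prop :=
  ∀ a ∈ C, ∀ s : S, f (a ⊛ s) = f a ⊛ s

/-- A subact: a nonempty subset closed under the action. -/
def IsSubact (S : Type u) [Monoid S] {A : Type u} [RightAct S A] (C : Set A) : Prop :=
  C.Nonempty ∧ ∀ a ∈ C, ∀ s : S, a ⊛ s ∈ C

/-- A zero element of an act: fixed by the action of every `s ∈ S`. -/
def IsZeroElem (S : Type u) [Monoid S] {A : Type u} [RightAct S A] (θ : A) : Prop :=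
  ∀ s : S, θ ⊛ s = θ

/-- A subset `D` (viewed as an act) is decomposable: it is the disjoint union of two
nonempty subacts. -/
def DecomposableSet (S : Type u) [Monoid S] {A : Type u} [RightAct S A] (D : Set A) : Prop :=
  ∃ B C : Set A, IsSubact S B ∧ IsSubact S C ∧ B ∪ C = D ∧ B ∩ C = ∅

/-- A subset (viewed as an act) is indecomposable. -/
def IndecomposableSet (S : Type u) [Monoid S] {A : Type u} [RightAct S A] (D : Set A) : Prop :=
  ¬ DecomposableSet S D

/-- The act `A` is decomposable. -/
def Decomposable (S : Type u) [Monoid S] (A : Type u) [RightAct S A] : Prop :=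
  DecomposableSet S (Set.univ : Set A)

/-- The act `A` is indecomposable. -/
def Indecomposable (S : Type u) [Monoid S] (A : Type u) [RightAct S A] : Prop :=
  ¬ Decomposable S A

/-- A cyclic act: generated by a single element. -/
def CyclicAct (S : Type u) [Monoid S] (A : Type u) [RightAct S A] : Prop :=
  ∃ a : A, ∀ x : A, ∃ s : S, x = a ⊛ s

/-- `A` is a retract of `B`. -/
def IsRetractOf (S : Type u) [Monoid S] (A B : Type u) [RightAct S A] [RightAct S B] : Prop :=
  ∃ (i : A → B) (p : B → A), IsActHom S i ∧ IsActHom S p ∧ ∀ a : A, p (i a) = a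

/-- `Q` is an injective act: every homomorphism from a subact `C` of any act `B` into `Q`
extends to `B`. -/
def ActInjective (S : Type u) [Monoid S] (Q : Type u) [RightAct S Q] : Prop :=
  ∀ (B : Type u) [RightAct S B], ∀ C : Set B, IsSubact S C →
    ∀ f : B → Q, IsActHomOn S f C →
      ∃ g : B → Q, IsActHom S g ∧ Set.EqOn g f C

/-- `Q` is InC-injective: injective relative to all embeddings into indecomposable acts. -/
def InCInjective (S : Type u) [Monoid S] (Q : Type u) [RightAct S Q] : Prop :=
  ∀ (B : Type u) [RightAct S B], Indecomposable S B → ∀ C : Set B, IsSubact S C →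
    ∀ f : B → Q, IsActHomOn S f C →
      ∃ g : B → Q, IsActHom S g ∧ Set.EqOn g f C

/-- `Q` is InD-injective: injective relative to all embeddings of indecomposable acts. -/
def InDInjective (S : Type u) [Monoid S] (Q : Type u) [RightAct S Q] : Prop :=
  ∀ (B : Type u) [RightAct S B], ∀ C : Set B, IsSubact S C → IndecomposableSet S C →
    ∀ f : B → Q, IsActHomOn S f C →
      ∃ g : B → Q, IsActHom S g ∧ Set.EqOn g f C

/-- `Q` is PInD-injective: every monomorphism from an indecomposable subact extends. -/
def PInDInjective (S : Type u) [Monoid S] (Q : Type u) [RightAct S Q] : Prop :=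
  ∀ (B : Type u) [RightAct S B], ∀ C : Set B, IsSubact S C → IndecomposableSet S C →
    ∀ f : B → Q, IsActHomOn S f C → Set.InjOn f C →
      ∃ g : B → Q, IsActHom S g ∧ Set.EqOn g f C

/-- `A` is quasi injective: homomorphisms from subacts of `A` to `A` extend to `A`. -/
def QuasiInjective (S : Type u) [Monoid S] (A : Type u) [RightAct S A] : Prop :=
  ∀ C : Set A, IsSubact S C → ∀ f : A → A, IsActHomOn S f C →
    ∃ g : A → A, IsActHom S g ∧ Set.EqOn g f C

/-- `A` is pseudo injective: monomorphisms from subacts of any act into `A` extend. -/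
def PseudoInjective (S : Type u) [Monoid S] (A : Type u) [RightAct S A] : Prop :=
  ∀ (C : Type u) [RightAct S C], ∀ B : Set C, IsSubact S B →
    ∀ f : C → A, IsActHomOn S f B → Set.InjOn f B →
      ∃ g : C → A, IsActHom S g ∧ Set.EqOn g f B

/-- A subact `Q` of `A` (viewed as an act in its own right) is injective. -/
def ActInjectiveSet (S : Type u) [Monoid S] {A : Type u} [RightAct S A] (Q : Set A) : Prop :=
  ∀ (B : Type u) [RightAct S B], ∀ C : Set B, IsSubact S C →
    ∀ f : B → A, IsActHomOn S f C → (∀ c ∈ C, f c ∈ Q) →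
      ∃ g : B → A, IsActHom S g ∧ (∀ b : B, g b ∈ Q) ∧ Set.EqOn g f C

/-- A subact `Q` of `A` (viewed as an act in its own right) is InD-injective. -/
def InDInjectiveSet (S : Type u) [Monoid S] {A : Type u} [RightAct S A] (Q : Set A) : Prop :=
  ∀ (B : Type u) [RightAct S B], ∀ C : Set B, IsSubact S C → IndecomposableSet S C →
    ∀ f : B → A, IsActHomOn S f C → (∀ c ∈ C, f c ∈ Q) →
      ∃ g : B → A, IsActHom S g ∧ (∀ b : B, g b ∈ Q) ∧ Set.EqOn g f C

/-- A subact `Q` of `A` (viewed as an act in its own right) is PInD-injective. -/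
def PInDInjectiveSet (S : Type u) [Monoid S] {A : Type u} [RightAct S A] (Q : Set A) : Prop :=
  ∀ (B : Type u) [RightAct S B], ∀ C : Set B, IsSubact S C → IndecomposableSet S C →
    ∀ f : B → A, IsActHomOn S f C → Set.InjOn f C → (∀ c ∈ C, f c ∈ Q) →
      ∃ g : B → A, IsActHom S g ∧ (∀ b : B, g b ∈ Q) ∧ Set.EqOn g f C

/-- The monoid `S` as a right act over itself, by multiplication. -/
instance selfAct (S : Type u) [Monoid S] : RightAct S S where
  act a s := a * s
  act_one := mul_one
  act_mul a s t := mul_assoc a s t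
  nonempty := ⟨1⟩

/-- `Q` is weakly injective: homomorphisms from right ideals of `S` into `Q` extend to `S`. -/
def WeaklyInjective (S : Type u) [Monoid S] (Q : Type u) [RightAct S Q] : Prop :=
  ∀ I : Set S, IsSubact S I → ∀ f : S → Q, IsActHomOn S f I →
    ∃ g : S → Q, IsActHom S g ∧ Set.EqOn g f I

/-- The relation whose equivalence closure has the indecomposable components as classes. -/
def ActRel (S : Type u) [Monoid S] {A : Type u} [RightAct S A] (a b : A) : Prop :=
  ∃ s : S, b = a ⊛ s

/-- The indecomposable component of the element `a` of an act. -/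
def ActComponent (S : Type u) [Monoid S] {A : Type u} [RightAct S A] (a : A) : Set A :=
  {b | Relation.EqvGen (ActRel S) a b}

/-- The coproduct (disjoint union) of a family of acts. -/
instance sigmaAct (S : Type u) [Monoid S] {I : Type u} [Nonempty I] (A : I → Type u)
    [∀ i, RightAct S (A i)] : RightAct S (Σ i, A i) where
  act x s := ⟨x.1, x.2 ⊛ s⟩
  act_one x := by cases x; simp [RightAct.act_one]
  act_mul x s t := by cases x; simp [RightAct.act_mul]
  nonempty := ⟨⟨Classical.arbitrary I, Classical.choice (RightAct.nonempty (S := S))⟩⟩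

/-!
If `S` has a left zero `z`, every act has the zero `q ⊛ z`. If `S` is not left reversible,
say `aS ∩ bS = ∅`, then gluing a free generator `e` to an act `Q` along `e ⊛ b ↦ q ⊛ b` and
collapsing `e ⊛ aS` to a zero shows that a zero lies in every component of a PInD-injective
act. In both cases every component `A i` of the coproduct has a zero, so it is a retract of the
coproduct and inherits (P)InD-injectivity.

Conversely, if `S` is left reversible without left zero, the maps `S → S` that are constant on
no principal right ideal form an act `U` without zero. Every PInD-injective act has a zero, so
`U` is not PInD-injective; yet `U ⊔ 1` is InD-injective: left reversibility makes the elements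
having a multiple in an indecomposable subact `C` a subact with closed complement; a map
`f : C → U` extends to it by the cofree construction `x ↦ (w ↦ (f (x ⊛ w)) 1)`, and the
complement goes to `1`.
-/

section

variable {S : Type u} [Monoid S]

section Basic

variable {A B : Type u} [RightAct S A] [RightAct S B]

lemma eqvGen_actRel_map {g : A → B} (hg : IsActHom S g) {x y : A}
    (h : Relation.EqvGen (ActRel S) x y) : Relation.EqvGen (ActRel S) (g x) (g y) := by
  induction h with
  | rel x y h => obtain ⟨s, rfl⟩ := h; exact .rel _ _ ⟨s, hg x s⟩
  | refl x => exact .refl _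
  | symm x y _ ih => exact ih.symm
  | trans x y z _ _ ih₁ ih₂ => exact ih₁.trans _ _ _ ih₂

lemma isSubact_range_act (c : A) : IsSubact S (Set.range (fun s : S => c ⊛ s)) :=
  ⟨⟨c ⊛ 1, 1, rfl⟩, fun _ ⟨s, hs⟩ t => ⟨s * t, by rw [← hs, RightAct.act_mul]⟩⟩

lemma indecomposableSet_range_act (c : A) :
    IndecomposableSet S (Set.range (fun s : S => c ⊛ s)) := by
  rintro ⟨B₁, B₂, h₁, h₂, hunion, hdisj⟩
  have hc : c ∈ B₁ ∪ B₂ := hunion ▸ ⟨1, RightAct.act_one c⟩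
  have key {T : Set A} (hT : IsSubact S T) (hcT : c ∈ T) :
      Set.range (fun s : S => c ⊛ s) ⊆ T := by
    rintro _ ⟨s, rfl⟩
    exact hT.2 c hcT s
  rcases hc with hc | hc
  · obtain ⟨x, hx⟩ := h₂.1
    exact hdisj.subset ⟨key h₁ hc (hunion.subset (Or.inr hx)), hx⟩
  · obtain ⟨x, hx⟩ := h₁.1
    exact hdisj.subset ⟨hx, key h₂ hc (hunion.subset (Or.inl hx))⟩

lemma IndecomposableSet.subset_of_act_mem_iff {C T : Set A} (hC : IsSubact S C)
    (hCi : IndecomposableSet S C) {x₀ : A} (hx₀C : x₀ ∈ C) (hx₀T : x₀ ∈ T)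
    (hT : ∀ x ∈ C, ∀ s : S, x ⊛ s ∈ T ↔ x ∈ T) : C ⊆ T := by
  intro x hxC
  by_contra hxT
  refine hCi ⟨C ∩ T, C \ T, ⟨⟨x₀, hx₀C, hx₀T⟩, ?_⟩, ⟨⟨x, hxC, hxT⟩, ?_⟩,
    Set.inter_union_sdiff C T,
    Set.disjoint_iff_inter_eq_empty.1 Set.disjoint_sdiff_inter.symm⟩
  · exact fun y hy s => ⟨hC.2 y hy.1 s, (hT y hy.1 s).2 hy.2⟩
  · exact fun y hy s => ⟨hC.2 y hy.1 s, fun h => hy.2 ((hT y hy.1 s).1 h)⟩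

lemma isActHom_piecewise {D : Set B} [∀ x, Decidable (x ∈ D)]
    (hD : ∀ (x : B) (s : S), x ⊛ s ∈ D ↔ x ∈ D) {g₁ g₂ : B → A}
    (hg₁ : IsActHomOn S g₁ D) (hg₂ : IsActHomOn S g₂ Dᶜ) : IsActHom S (D.piecewise g₁ g₂) := by
  intro x s
  by_cases hx : x ∈ D
  · rw [D.piecewise_eq_of_mem _ _ hx, D.piecewise_eq_of_mem _ _ ((hD x s).2 hx), hg₁ x hx s]
  · rw [D.piecewise_eq_of_notMem _ _ hx, D.piecewise_eq_of_notMem _ _ (mt (hD x s).1 hx),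
      hg₂ x hx s]

lemma IsActHom.comp {D : Type u} [RightAct S D] {g : B → D} {f : A → B} (hg : IsActHom S g)
    (hf : IsActHom S f) : IsActHom S (g ∘ f) :=
  fun a s => by simp only [Function.comp_apply, hf a s, hg (f a) s]

lemma IsActHom.comp_isActHomOn {D : Type u} [RightAct S D] {g : B → D} {f : A → B} {C : Set A}
    (hg : IsActHom S g) (hf : IsActHomOn S f C) : IsActHomOn S (g ∘ f) C :=
  fun a ha s => by simp only [Function.comp_apply, hf a ha s, hg (f a) s]

lemma exists_isZeroElem_of_isLeftZero {z : S} (hz : IsLeftZero S z) :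
    ∃ θ : A, IsZeroElem S θ :=
  let ⟨q⟩ := RightAct.nonempty (S := S) (A := A)
  ⟨q ⊛ z, fun s => by rw [RightAct.act_mul, hz s]⟩

end Basic

section Sigma

variable {I : Type u} {A : I → Type u}

noncomputable def sigmaProj (i : I) (d : A i) : (Σ j, A j) → A i
  | ⟨j, v⟩ => open Classical in if h : j = i then h ▸ v else d

@[simp]
lemma sigmaProj_mk {i : I} (d v : A i) : sigmaProj i d ⟨i, v⟩ = v := dif_pos rfl

lemma sigma_mk_sigmaProj {i : I} (d : A i) {x : Σ j, A j} (hx : x.1 = i) :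
    (⟨i, sigmaProj i d x⟩ : Σ j, A j) = x := by
  obtain ⟨j, v⟩ := x
  subst hx
  rw [sigmaProj_mk]

variable [Nonempty I] [∀ i, RightAct S (A i)]

lemma sigma_mk_act (i : I) (v : A i) (s : S) : (⟨i, v⟩ : Σ j, A j) ⊛ s = ⟨i, v ⊛ s⟩ := rfl

lemma eqvGen_actRel_sigma_fst {x y : Σ i, A i} (h : Relation.EqvGen (ActRel S) x y) :
    x.1 = y.1 := by
  induction h with
  | rel x y h => obtain ⟨s, rfl⟩ := h; rfl
  | refl x => rfl
  | symm x y _ ih => exact ih.symm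
  | trans x y z _ _ ih₁ ih₂ => exact ih₁.trans ih₂

lemma isZeroElem_of_sigma_mk {i : I} {v : A i} (h : IsZeroElem S (⟨i, v⟩ : Σ j, A j)) :
    IsZeroElem S v :=
  fun s => sigma_mk_injective (h s)

lemma isActHom_sigmaProj {i : I} {θ : A i} (hθ : IsZeroElem S θ) :
    IsActHom S (sigmaProj i θ) := by
  rintro ⟨j, v⟩ s
  by_cases hj : j = i
  · subst hj
    rw [sigma_mk_act, sigmaProj_mk, sigmaProj_mk]
  · simp only [sigma_mk_act, sigmaProj, dif_neg hj, hθ s]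

lemma isRetractOf_sigma {i : I} {θ : A i} (hθ : IsZeroElem S θ) :
    IsRetractOf S (A i) (Σ j, A j) :=
  ⟨Sigma.mk i, sigmaProj i θ, fun _ _ => rfl, isActHom_sigmaProj hθ, sigmaProj_mk θ⟩

lemma IsActHomOn.exists_sigma_mk {B : Type u} [RightAct S B] {C : Set B} (hC : IsSubact S C)
    (hCi : IndecomposableSet S C) {f : B → Σ i, A i} (hf : IsActHomOn S f C) :
    ∃ (i : I) (f' : B → A i), IsActHomOn S f' C ∧ ∀ c ∈ C, f c = ⟨i, f' c⟩ := by
  obtain ⟨c₀, hc₀⟩ := hC.1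
  have hfst : C ⊆ {x | (f x).1 = (f c₀).1} :=
    hCi.subset_of_act_mem_iff hC hc₀ rfl fun x hx s => by
      show (f (x ⊛ s)).1 = _ ↔ (f x).1 = _
      rw [hf x hx s]
      rfl
  have hff' : ∀ c ∈ C, f c = ⟨_, sigmaProj _ (f c₀).2 (f c)⟩ :=
    fun c hc => (sigma_mk_sigmaProj _ (hfst hc)).symm
  refine ⟨_, fun b => sigmaProj _ (f c₀).2 (f b), fun c hc s => sigma_mk_injective ?_, hff'⟩
  rw [← hff' _ (hC.2 c hc s), hf c hc s, hff' c hc]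
  rfl

end Sigma

section Injectivity

variable {Q A : Type u} [RightAct S Q] [RightAct S A]

lemma InDInjective.pInDInjective (hQ : InDInjective S Q) : PInDInjective S Q :=
  fun B _ C hC hCi f hf _ => hQ B C hC hCi f hf

lemma InDInjective.of_isRetractOf (hAQ : IsRetractOf S A Q) (hQ : InDInjective S Q) :
    InDInjective S A := by
  obtain ⟨ι, p, hι, hp, hpι⟩ := hAQ
  intro B _ C hC hCi f hf
  obtain ⟨g, hg, hgf⟩ := hQ B C hC hCi (ι ∘ f) (hι.comp_isActHomOn hf)
  exact ⟨p ∘ g, hp.comp hg, fun c hc => by simp [hgf hc, hpι]⟩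

lemma PInDInjective.of_isRetractOf (hAQ : IsRetractOf S A Q) (hQ : PInDInjective S Q) :
    PInDInjective S A := by
  obtain ⟨ι, p, hι, hp, hpι⟩ := hAQ
  intro B _ C hC hCi f hf hfi
  obtain ⟨g, hg, hgf⟩ := hQ B C hC hCi (ι ∘ f) (hι.comp_isActHomOn hf)
    ((Function.LeftInverse.injective hpι).comp_injOn hfi)
  exact ⟨p ∘ g, hp.comp hg, fun c hc => by simp [hgf hc, hpι]⟩

instance optionRightAct : RightAct S (Option A) where
  act x s := x.map (· ⊛ s)
  act_one x := by cases x <;> simp [RightAct.act_one]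
  act_mul x s t := by cases x <;> simp [RightAct.act_mul]
  nonempty := ⟨none⟩

lemma PInDInjective.exists_isZeroElem (hQ : PInDInjective S Q) : ∃ θ : Q, IsZeroElem S θ := by
  obtain ⟨q⟩ := RightAct.nonempty (S := S) (A := Q)
  let c : Option Q := some q
  obtain ⟨g, hg, -⟩ := hQ _ _ (isSubact_range_act c) (indecomposableSet_range_act c)
    (fun x => x.getD q) (by rintro _ ⟨s, rfl⟩ t; rfl)
    (by rintro _ ⟨s, rfl⟩ _ ⟨t, rfl⟩ h; exact congrArg some h)
  exact ⟨g none, fun s => (hg none s).symm⟩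

end Injectivity

lemma not_leftReversible_iff : ¬ LeftReversible S ↔ ∃ a b : S, ∀ x, a ∣ x → ¬ b ∣ x := by
  simp only [LeftReversible, not_forall, not_exists]
  refine exists₂_congr fun a b => ⟨fun h x ⟨u, hu⟩ ⟨v, hv⟩ => h u v (hu ▸ hv), ?_⟩
  exact fun h u v huv => h (a * u) (dvd_mul_right a u) ⟨v, huv⟩

/-- `Q` with a new generator `e` adjoined, subject to `e ⊛ x = q ⊛ x` for `x ∈ bS` and with
`e ⊛ aS` collapsed to the zero `none`; `some (Sum.inr x)` stands for `e ⊛ x`, `x ∉ aS ∪ bS`.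
(In a monoid, `a ∣ x` means `x ∈ aS`.) -/
def Glued {Q : Type u} (_q : Q) (a b : S) : Type u := Option (Q ⊕ {x : S // ¬ a ∣ x ∧ ¬ b ∣ x})

namespace Glued

variable {Q : Type u} [RightAct S Q] (q : Q) {a b : S}

/-- The element `e ⊛ x`. -/
noncomputable def gen (a b x : S) : Glued q a b :=
  open Classical in
  if ha : a ∣ x then none
  else if hb : b ∣ x then some (Sum.inl (q ⊛ x))
  else some (Sum.inr ⟨x, ha, hb⟩)

noncomputable def act : Glued q a b → S → Glued q a b
  | none, _ => none
  | some (Sum.inl y), s => some (Sum.inl (y ⊛ s))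
  | some (Sum.inr x), s => gen q a b (x.1 * s)

variable {q}

lemma gen_of_dvd_left {x : S} (ha : a ∣ x) : gen q a b x = none := dif_pos ha

lemma gen_of_dvd_right (hab : ∀ x, a ∣ x → ¬ b ∣ x) {x : S} (hb : b ∣ x) :
    gen q a b x = some (Sum.inl (q ⊛ x)) :=
  (dif_neg fun ha => hab x ha hb).trans (dif_pos hb)

lemma gen_of_not_dvd {x : S} (ha : ¬ a ∣ x) (hb : ¬ b ∣ x) :
    gen q a b x = some (Sum.inr ⟨x, ha, hb⟩) :=
  (dif_neg ha).trans (dif_neg hb)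

lemma act_gen (hab : ∀ x, a ∣ x → ¬ b ∣ x) (x s : S) :
    act q (gen q a b x) s = gen q a b (x * s) := by
  by_cases ha : a ∣ x
  · rw [gen_of_dvd_left ha, gen_of_dvd_left (ha.mul_right s)]
    rfl
  by_cases hb : b ∣ x
  · rw [gen_of_dvd_right hab hb, gen_of_dvd_right hab (hb.mul_right s)]
    exact congrArg (some ∘ Sum.inl) (RightAct.act_mul q x s)
  · rw [gen_of_not_dvd ha hb]
    rfl

noncomputable instance [Fact (∀ x : S, a ∣ x → ¬ b ∣ x)] : RightAct S (Glued q a b) where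
  act := act q
  act_one
    | none => rfl
    | some (Sum.inl y) => congrArg (some ∘ Sum.inl) (RightAct.act_one y)
    | some (Sum.inr x) => (congrArg _ (mul_one x.1)).trans (gen_of_not_dvd x.2.1 x.2.2)
  act_mul
    | none, _, _ => rfl
    | some (Sum.inl y), s, t => congrArg (some ∘ Sum.inl) (RightAct.act_mul y s t)
    | some (Sum.inr x), s, t => (act_gen Fact.out _ t).trans (congrArg _ (mul_assoc x.1 s t))
  nonempty := ⟨none⟩

end Glued

lemma PInDInjective.exists_isZeroElem_eqvGen {Q : Type u} [RightAct S Q]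
    (hQ : PInDInjective S Q) {a b : S} (hab : ∀ x, a ∣ x → ¬ b ∣ x) (q : Q) :
    ∃ θ : Q, IsZeroElem S θ ∧ Relation.EqvGen (ActRel S) q θ := by
  have : Fact (∀ x : S, a ∣ x → ¬ b ∣ x) := ⟨hab⟩
  let c : Glued q a b := some (Sum.inl q)
  obtain ⟨g, hg, hgf⟩ := hQ _ _ (isSubact_range_act c) (indecomposableSet_range_act c)
    (fun x => x.elim q (Sum.elim id fun _ => q)) (by rintro _ ⟨s, rfl⟩ t; rfl)
    (by rintro _ ⟨s, rfl⟩ _ ⟨t, rfl⟩ h; exact congrArg (some ∘ Sum.inl) h)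
  -- `c` and the zero `none` are linked through the new generator `e`.
  have hchain : Relation.EqvGen (ActRel S) c none := by
    let e := Glued.gen q a b 1
    have heb : e ⊛ b = c ⊛ b := (Glued.act_gen hab 1 b).trans <| by
      rw [one_mul, Glued.gen_of_dvd_right hab dvd_rfl]
      rfl
    have hea : e ⊛ a = none := (Glued.act_gen hab 1 a).trans <|
      Glued.gen_of_dvd_left (by rw [one_mul])
    exact (Relation.EqvGen.rel _ _ ⟨b, rfl⟩).trans _ _ _
      ((Relation.EqvGen.rel e _ ⟨b, heb.symm⟩).symm.trans _ _ _
        (Relation.EqvGen.rel _ _ ⟨a, hea.symm⟩))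
  refine ⟨g none, fun s => (hg none s).symm, ?_⟩
  have hqθ := eqvGen_actRel_map hg hchain
  rw [hgf ⟨1, RightAct.act_one c⟩] at hqθ
  exact hqθ

lemma PInDInjective.exists_isZeroElem_of_sigma {I : Type u} [Nonempty I] {A : I → Type u}
    [∀ i, RightAct S (A i)] (hS : ¬ LeftReversible S ∨ ∃ z : S, IsLeftZero S z)
    (h : PInDInjective S (Σ i, A i)) (i : I) : ∃ θ : A i, IsZeroElem S θ := by
  rcases hS with hS | ⟨z, hz⟩
  · obtain ⟨a, b, hab⟩ := not_leftReversible_iff.1 hS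
    obtain ⟨q⟩ := RightAct.nonempty (S := S) (A := A i)
    obtain ⟨⟨j, θ⟩, hθ, hqθ⟩ := h.exists_isZeroElem_eqvGen hab ⟨i, q⟩
    obtain rfl : i = j := eqvGen_actRel_sigma_fst hqθ
    exact ⟨θ, isZeroElem_of_sigma_mk hθ⟩
  · exact exists_isZeroElem_of_isLeftZero hz

lemma exists_act_act_mem_iff {B : Type u} [RightAct S B] (hLR : LeftReversible S) {C : Set B}
    (hC : IsSubact S C) (x : B) (t : S) : (∃ u : S, (x ⊛ t) ⊛ u ∈ C) ↔ ∃ u : S, x ⊛ u ∈ C := by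
  refine ⟨fun ⟨u, hu⟩ => ⟨t * u, by rwa [← RightAct.act_mul]⟩, fun ⟨u, hu⟩ => ?_⟩
  obtain ⟨p, r, hpr⟩ := hLR t u
  exact ⟨p, by rw [RightAct.act_mul, hpr, ← RightAct.act_mul]; exact hC.2 _ hu r⟩

def IsNowhereConst {X : Type*} (φ : S → X) : Prop :=
  ∀ s, ∃ x y, φ (s * x) ≠ φ (s * y)

lemma IsNowhereConst.comp_mul_left {X : Type*} {φ : S → X} (hφ : IsNowhereConst φ) (s : S) :
    IsNowhereConst fun x => φ (s * x) := by
  intro t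
  simpa only [mul_assoc] using hφ (s * t)

variable (S) in
/-- A subact of the cofree act `S → S`; it has no zero, and it is inhabited (by `id`) exactly
when `S` has no left zero. -/
abbrev NowhereConst : Type u := {φ : S → S // IsNowhereConst φ}

instance [Fact (∀ z : S, ¬ IsLeftZero S z)] : RightAct S (NowhereConst S) where
  act φ s := ⟨fun x => φ.1 (s * x), φ.2.comp_mul_left s⟩
  act_one φ := Subtype.ext <| funext fun x => congrArg φ.1 (one_mul x)
  act_mul φ s t := Subtype.ext <| funext fun x => congrArg φ.1 (mul_assoc s t x).symm
  nonempty := ⟨⟨id, fun s => by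
    obtain ⟨u, hu⟩ := not_forall.1 (Fact.out (p := ∀ z : S, ¬ IsLeftZero S z) s)
    exact ⟨u, 1, by rwa [mul_one]⟩⟩⟩

namespace NowhereConst

variable [Fact (∀ z : S, ¬ IsLeftZero S z)]

lemma act_val (φ : NowhereConst S) (s x : S) : (φ ⊛ s).1 x = φ.1 (s * x) := rfl

lemma not_isZeroElem (θ : NowhereConst S) : ¬ IsZeroElem S θ := by
  intro hθ
  have hconst (x : S) : θ.1 x = θ.1 1 := by
    simpa only [act_val, mul_one] using congrFun (congrArg Subtype.val (hθ x)) 1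
  obtain ⟨x, y, hxy⟩ := θ.2 1
  exact hxy (by rw [hconst (1 * x), hconst (1 * y)])

lemma not_pInDInjective : ¬ PInDInjective S (NowhereConst S) := fun h =>
  let ⟨θ, hθ⟩ := h.exists_isZeroElem
  θ.not_isZeroElem hθ

/-- Left reversibility keeps the cofree extension `x ↦ (w ↦ (f (x ⊛ w)) 1)` nowhere constant
on the elements having a multiple in `C`. -/
lemma exists_extension (hLR : LeftReversible S) {B : Type u} [RightAct S B] {C : Set B}
    (hC : IsSubact S C) {f : B → NowhereConst S} (hf : IsActHomOn S f C) :
    ∃ g : B → NowhereConst S, IsActHomOn S g {x | ∃ u : S, x ⊛ u ∈ C} ∧ Set.EqOn g f C := by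
  classical
  let h : B → S := fun y => (f y).1 1
  have hcw : ∀ c ∈ C, ∀ w : S, h (c ⊛ w) = (f c).1 w := fun c hc w => by
    simp only [h, hf c hc w, act_val, mul_one]
  have hlift : ∀ x ∈ {x | ∃ u : S, x ⊛ u ∈ C}, IsNowhereConst fun w : S => h (x ⊛ w) := by
    intro x hx s
    obtain ⟨v, hv⟩ := (exists_act_act_mem_iff hLR hC x s).2 hx
    obtain ⟨y, z, hyz⟩ := (f ((x ⊛ s) ⊛ v)).2 1
    refine ⟨v * y, v * z, ?_⟩
    show h (x ⊛ (s * (v * y))) ≠ h (x ⊛ (s * (v * z)))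
    simp only [← RightAct.act_mul]
    rwa [hcw _ hv, hcw _ hv, ← one_mul y, ← one_mul z]
  let g : B → NowhereConst S := fun x =>
    if hx : x ∈ {x | ∃ u : S, x ⊛ u ∈ C} then ⟨_, hlift x hx⟩ else f x
  refine ⟨g, ?_, ?_⟩
  · intro x hx s
    simp only [g]
    rw [dif_pos hx, dif_pos (show x ⊛ s ∈ {x | ∃ u : S, x ⊛ u ∈ C} from
      (exists_act_act_mem_iff hLR hC x s).2 hx)]
    exact Subtype.ext <| funext fun w => congrArg h (RightAct.act_mul x s w)
  · intro c hc
    simp only [g]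
    rw [dif_pos ⟨1, by rwa [RightAct.act_one]⟩]
    exact Subtype.ext <| funext (hcw c hc)

end NowhereConst

instance punitRightAct : RightAct S PUnit.{u + 1} where
  act _ _ := PUnit.unit
  act_one _ := rfl
  act_mul _ _ _ := rfl
  nonempty := ⟨PUnit.unit⟩

def WithTerminal (A : Type u) : ULift.{u} Bool → Type u
  | ⟨true⟩ => A
  | ⟨false⟩ => PUnit

instance withTerminalRightAct {A : Type u} [RightAct S A] : ∀ i, RightAct S (WithTerminal A i)
  | ⟨true⟩ => ‹RightAct S A›
  | ⟨false⟩ => punitRightAct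

lemma inDInjective_sigma_withTerminal_nowhereConst [Fact (∀ z : S, ¬ IsLeftZero S z)]
    (hLR : LeftReversible S) : InDInjective S (Σ i, WithTerminal (NowhereConst S) i) := by
  classical
  intro B _ C hC hCi f hf
  obtain ⟨⟨i⟩, f', hf', hff'⟩ := hf.exists_sigma_mk hC hCi
  cases i with
  | false => exact ⟨fun _ => ⟨⟨false⟩, PUnit.unit⟩, fun _ _ => rfl, fun c hc => (hff' c hc).symm⟩
  | true =>
    obtain ⟨g, hg, hgf⟩ := NowhereConst.exists_extension hLR hC (f := f') hf'
    let D : Set B := {x | ∃ u : S, x ⊛ u ∈ C}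
    refine ⟨D.piecewise (fun x => ⟨⟨true⟩, g x⟩) fun _ => ⟨⟨false⟩, PUnit.unit⟩,
      isActHom_piecewise (exists_act_act_mem_iff hLR hC) (fun x hx s => congrArg _ (hg x hx s))
        fun _ _ _ => rfl, fun c hc => ?_⟩
    rw [D.piecewise_eq_of_mem _ _ ⟨1, by rwa [RightAct.act_one]⟩, hff' c hc, hgf hc]

lemma exists_sigma_inDInjective_not_pInDInjective (hLR : LeftReversible S)
    (hS : ∀ z : S, ¬ IsLeftZero S z) :
    ∃ (A : ULift.{u} Bool → Type u) (_ : ∀ i, RightAct S (A i)),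
      InDInjective S (Σ i, A i) ∧ ¬ PInDInjective S (A ⟨true⟩) :=
  have : Fact (∀ z : S, ¬ IsLeftZero S z) := ⟨hS⟩
  ⟨_, _, inDInjective_sigma_withTerminal_nowhereConst hLR, NowhereConst.not_pInDInjective⟩

end

theorem coproduct_components_inDInjective_tfae (S : Type u) [Monoid S] :
    List.TFAE [
      ∀ (I : Type u) [Nonempty I] (A : I → Type u) [∀ i, RightAct S (A i)],
        InDInjective S (Σ i, A i) → ∀ i, InDInjective S (A i),
      ∀ (I : Type u) [Nonempty I] (A : I → Type u) [∀ i, RightAct S (A i)],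
        PInDInjective S (Σ i, A i) → ∀ i, PInDInjective S (A i),
      ¬ LeftReversible S ∨ ∃ z : S, IsLeftZero S z ] := by
  have counterexample (h3 : ¬ (¬ LeftReversible S ∨ ∃ z : S, IsLeftZero S z)) :=
    exists_sigma_inDInjective_not_pInDInjective (not_not.1 (not_or.1 h3).1)
      (not_exists.1 (not_or.1 h3).2)
  tfae_have 3 → 1 := fun h3 I _ A _ h i =>
    let ⟨_, hθ⟩ := h.pInDInjective.exists_isZeroElem_of_sigma h3 i
    h.of_isRetractOf (isRetractOf_sigma hθ)
  tfae_have 3 → 2 := fun h3 I _ A _ h i =>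
    let ⟨_, hθ⟩ := h.exists_isZeroElem_of_sigma h3 i
    h.of_isRetractOf (isRetractOf_sigma hθ)
  tfae_have 1 → 3 := fun h1 => by_contra fun h3 =>
    let ⟨A, _, hsum, hA⟩ := counterexample h3
    hA (h1 _ A hsum ⟨true⟩).pInDInjective
  tfae_have 2 → 3 := fun h2 => by_contra fun h3 =>
    let ⟨A, _, hsum, hA⟩ := counterexample h3
    hA (h2 _ A hsum.pInDInjective ⟨true⟩)
  tfae_finish
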